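/- arXiv:2506.15975 — 3 statements merged into one kernel-verified Lean document; each statement's English description precedes it below -/
import Mathlib

section
/- Let T ≥ 1 be an integer and let X be a random variable following a Gamma distribution with shape parameter T and scale parameter 1/T. Then for every real a ≥ 1, Pr(X ≥ a) ≤ exp(T · (a·(1/e − 1) + 1)), i.e., Pr(X ≥ a) ≤ exp(T·(a/e − a + 1)). -/
open MeasureTheory ProbabilityTheory Real Set

/-! Exponential tilting: the density ratio of `Gamma(α, rate r)` to `Gamma(α, rate s)` is
`(r/s)^α e^{-(r-s)x}`, decreasing in `x` for `s ≤ r`, so on `[a, ∞)` it is at most its value at `a`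
and the tail is bounded by that value. Rates `r = T`, `s = T/e` give `e^T e^{-T(1-1/e)a}`. -/

lemma gammaPDFReal_le_mul_gammaPDFReal {α r s a x : ℝ} (hα : 0 < α) (hs : 0 < s) (hsr : s ≤ r)
    (hax : a ≤ x) :
    gammaPDFReal α r x ≤ (r / s) ^ α * exp (-((r - s) * a)) * gammaPDFReal α s x := by
  unfold gammaPDFReal
  split_ifs with hx
  · have hr : 0 < r := hs.trans_le hsr
    have hr_pow : r ^ α = (r / s) ^ α * s ^ α := by
      rw [div_rpow hr.le hs.le, div_mul_cancel₀ _ (rpow_pos_of_pos hs α).ne']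
    have hr_exp : exp (-(r * x)) = exp (-((r - s) * x)) * exp (-(s * x)) := by
      rw [← exp_add]; ring_nf
    calc r ^ α / Gamma α * x ^ (α - 1) * exp (-(r * x))
        = (r / s) ^ α * exp (-((r - s) * x)) *
            (s ^ α / Gamma α * x ^ (α - 1) * exp (-(s * x))) := by
          rw [hr_pow, hr_exp]; ring
      _ ≤ (r / s) ^ α * exp (-((r - s) * a)) *
            (s ^ α / Gamma α * x ^ (α - 1) * exp (-(s * x))) := by
          gcongr
  · simp

lemma gammaMeasure_Ici_le {α r s : ℝ} (hα : 0 < α) (hs : 0 < s) (hsr : s ≤ r) (a : ℝ) :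
    gammaMeasure α r (Ici a) ≤ ENNReal.ofReal ((r / s) ^ α * exp (-((r - s) * a))) := by
  have hr : 0 < r := hs.trans_le hsr
  set C := (r / s) ^ α * exp (-((r - s) * a))
  have hC : 0 ≤ C := by positivity
  have h_pdf : ∀ x ∈ Ici a, gammaPDF α r x ≤ ENNReal.ofReal C * gammaPDF α s x := fun x hx ↦ by
    rw [gammaPDF, gammaPDF, ← ENNReal.ofReal_mul hC]
    exact ENNReal.ofReal_le_ofReal (gammaPDFReal_le_mul_gammaPDFReal hα hs hsr hx)
  rw [gammaMeasure, withDensity_apply _ measurableSet_Ici]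
  calc ∫⁻ x in Ici a, gammaPDF α r x
      ≤ ∫⁻ x in Ici a, ENNReal.ofReal C * gammaPDF α s x :=
        setLIntegral_mono ((measurable_gammaPDFReal _ _).ennreal_ofReal.const_mul _) h_pdf
    _ = ENNReal.ofReal C * ∫⁻ x in Ici a, gammaPDF α s x :=
        lintegral_const_mul' _ _ ENNReal.ofReal_ne_top
    _ ≤ ENNReal.ofReal C * ∫⁻ x, gammaPDF α s x := by
        gcongr; exact Measure.restrict_le_self
    _ = ENNReal.ofReal C := by rw [lintegral_gammaPDF_eq_one hα hs, mul_one]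

theorem gamma_tail_bound_exp_general
    {Ω : Type*} [MeasurableSpace Ω] (μ : Measure Ω)
    (T : ℕ) (hT : 1 ≤ T) (X : Ω → ℝ)
    (hX : Measure.map X μ = gammaMeasure T T)
    (a : ℝ) :
    μ {ω | a ≤ X ω} ≤
      ENNReal.ofReal (Real.exp (T * (a * (1 / Real.exp 1 - 1) + 1))) := by
  have hT0 : (0 : ℝ) < T := by exact_mod_cast hT
  have : IsProbabilityMeasure (gammaMeasure T T) := isProbabilityMeasure_gammaMeasure hT0 hT0
  have hXm : AEMeasurable X μ := .of_map_ne_zero (hX ▸ IsProbabilityMeasure.ne_zero _)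
  have h_law : μ {ω | a ≤ X ω} = gammaMeasure T T (Ici a) := by
    rw [← hX, Measure.map_apply_of_aemeasurable hXm measurableSet_Ici]; rfl
  have h_rate : (T : ℝ) / exp 1 ≤ T := div_le_self hT0.le (one_le_exp zero_le_one)
  calc μ {ω | a ≤ X ω}
      ≤ ENNReal.ofReal ((T / (T / exp 1)) ^ (T : ℝ) * exp (-((T - T / exp 1) * a))) :=
        h_law ▸ gammaMeasure_Ici_le hT0 (by positivity) h_rate a
    _ = ENNReal.ofReal (exp (T * (a * (1 / exp 1 - 1) + 1))) := by
        rw [div_div_cancel₀ hT0.ne', exp_one_rpow, ← exp_add]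
        ring_nf

/-- If `X ~ Gamma(T, 1/T)` (shape `T`, scale `1/T`, i.e. rate `T`), then for every `a ≥ 1`,
`Pr(X ≥ a) ≤ exp(T·(a·(1/e − 1) + 1))`. -/
theorem gamma_tail_bound_exp
    {Ω : Type*} [MeasurableSpace Ω] (μ : Measure Ω) [IsProbabilityMeasure μ]
    (T : ℕ) (hT : 1 ≤ T) (X : Ω → ℝ)
    (hX : Measure.map X μ = gammaMeasure T T)
    (a : ℝ) (ha : 1 ≤ a) :
    μ {ω | a ≤ X ω} ≤
      ENNReal.ofReal (Real.exp (T * (a * (1 / Real.exp 1 - 1) + 1))) :=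
  gamma_tail_bound_exp_general μ T hT X hX a
end

section
/- Let T ≥ 1 and K ≥ 1 be integers, and let {u_i(ξ) : 1 ≤ i ≤ T, 1 ≤ ξ ≤ K} be a family of mutually independent random variables, each uniformly distributed on [0, 1]. Define for each ξ the score S_k(ξ) = −(1/T) · Σ_{i=1}^{T} ln(1 − u_i(ξ)). Then for every real τ_k ≥ e/(e−1), Pr(max_{1 ≤ ξ ≤ K} S_k(ξ) ≥ τ_k) ≤ 1 − (1 − exp(T·(τ_k·(1/e − 1) + 1)))^K. -/
/-!
Each `X = -log (1 - u)` with `u` uniform on `[0,1]` is exponentially distributed: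
`E[exp (t X)] = ∫₀¹ (1 - x)^(-t) dx = 1/(1 - t)` for `t < 1`. The Chernoff bound for a sum of `T`
independent copies at `t = 1 - 1/e` gives
`P(S(ξ) ≥ τ) ≤ exp(-(1 - 1/e) T τ) · e^T = exp(T (τ (1/e - 1) + 1)) =: p`,
and `p ≤ 1` exactly when `τ ≥ e/(e - 1)`. The scores of different keys are functions of disjoint
columns of an independent array, hence independent, so
`P(max_ξ S(ξ) ≥ τ) = 1 - ∏_ξ P(S(ξ) < τ) ≤ 1 - (1 - p)^K`.
-/

open MeasureTheory ProbabilityTheory Real Set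

theorem intervalIntegrable_one_sub_rpow {r : ℝ} (hr : -1 < r) :
    IntervalIntegrable (fun x : ℝ ↦ (1 - x) ^ r) volume 0 1 := by
  simpa using
    ((intervalIntegral.intervalIntegrable_rpow' (a := 0) (b := 1) hr).comp_sub_left 1).symm

theorem integral_one_sub_rpow {r : ℝ} (hr : -1 < r) :
    ∫ x in (0 : ℝ)..1, (1 - x) ^ r = (r + 1)⁻¹ := by
  rw [intervalIntegral.integral_comp_sub_left (fun x ↦ x ^ r), integral_rpow (Or.inl hr)]
  simp [zero_rpow (by linarith : r + 1 ≠ 0)]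

theorem mul_one_div_exp_sub_one_add_one_nonpos {τ : ℝ} (hτ : exp 1 / (exp 1 - 1) ≤ τ) :
    τ * (1 / exp 1 - 1) + 1 ≤ 0 := by
  have he : 1 < exp 1 := by linarith [exp_one_gt_d9]
  rw [div_le_iff₀ (by linarith)] at hτ
  have hrw : τ * (1 / exp 1 - 1) + 1 = (exp 1 - τ * (exp 1 - 1)) / exp 1 := by
    field_simp
    ring
  rw [hrw]
  exact div_nonpos_of_nonpos_of_nonneg (by linarith) (exp_pos 1).le

namespace ProbabilityTheory

theorem mgf_neg_log_one_sub_uniform {t : ℝ} (ht : t < 1) :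
    Integrable (fun x ↦ exp (t * -log (1 - x))) (volume.restrict (Icc (0 : ℝ) 1)) ∧
      mgf (fun x ↦ -log (1 - x)) (volume.restrict (Icc (0 : ℝ) 1)) t = (1 - t)⁻¹ := by
  have hr : -1 < -t := by linarith
  have hae : (fun x ↦ exp (t * -log (1 - x))) =ᵐ[volume.restrict (Ioc (0 : ℝ) 1)]
      fun x ↦ (1 - x) ^ (-t) := by
    rw [← restrict_Ioo_eq_restrict_Ioc]
    filter_upwards [ae_restrict_mem measurableSet_Ioo] with x hx
    rw [rpow_def_of_pos (sub_pos.mpr hx.2)]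
    ring_nf
  rw [← restrict_Ioc_eq_restrict_Icc]
  constructor
  · exact ((intervalIntegrable_iff_integrableOn_Ioc_of_le zero_le_one).mp
      (intervalIntegrable_one_sub_rpow hr)).congr hae.symm
  · rw [mgf, integral_congr_ae hae, ← intervalIntegral.integral_of_le zero_le_one,
      integral_one_sub_rpow hr]
    ring_nf

variable {Ω ι : Type*} [MeasurableSpace Ω] {μ : Measure Ω}

theorem mgf_neg_log_one_sub_of_map_eq {v : Ω → ℝ} (hv : Measurable v)
    (hunif : μ.map v = volume.restrict (Icc 0 1)) {t : ℝ} (ht : t < 1) :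
    Integrable (fun ω ↦ exp (t * -log (1 - v ω))) μ ∧
      mgf (fun ω ↦ -log (1 - v ω)) μ t = (1 - t)⁻¹ := by
  obtain ⟨hint, hmgf⟩ := mgf_neg_log_one_sub_uniform ht
  rw [← hunif] at hint hmgf
  have hmeas : AEStronglyMeasurable (fun x ↦ exp (t * -log (1 - x))) (μ.map v) :=
    Measurable.aestronglyMeasurable (by fun_prop)
  exact ⟨(integrable_map_measure hmeas hv.aemeasurable).mp hint,
    (mgf_map hv.aemeasurable hmeas).symm.trans hmgf⟩

theorem measureReal_sum_neg_log_one_sub_ge_le [Fintype ι] {v : ι → Ω → ℝ}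
    (hv : ∀ i, Measurable (v i)) (h : iIndepFun v μ)
    (hunif : ∀ i, μ.map (v i) = volume.restrict (Icc 0 1)) (a : ℝ) {t : ℝ} (ht₀ : 0 ≤ t)
    (ht₁ : t < 1) :
    μ.real {ω | a ≤ ∑ i, -log (1 - v i ω)} ≤ exp (-t * a) * (1 - t)⁻¹ ^ Fintype.card ι := by
  have := h.isProbabilityMeasure
  set X : ι → Ω → ℝ := fun i ω ↦ -log (1 - v i ω)
  have hXm : ∀ i, Measurable (X i) := fun i ↦ by fun_prop
  have hX : iIndepFun X μ := h.comp (fun _ x ↦ -log (1 - x)) fun _ ↦ by fun_prop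
  have hXmgf i := mgf_neg_log_one_sub_of_map_eq (hv i) (hunif i) ht₁
  have key := measure_ge_le_exp_mul_mgf a ht₀
    (hX.integrable_exp_mul_sum hXm (s := Finset.univ) fun i _ ↦ (hXmgf i).1)
  simpa [hX.mgf_sum hXm, X, (hXmgf _).2] using key

theorem measureReal_neg_mean_log_one_sub_ge_le [Fintype ι] [Nonempty ι] {v : ι → Ω → ℝ}
    (hv : ∀ i, Measurable (v i)) (h : iIndepFun v μ)
    (hunif : ∀ i, μ.map (v i) = volume.restrict (Icc 0 1)) (τ : ℝ) :
    μ.real {ω | τ ≤ -(1 / (Fintype.card ι : ℝ)) * ∑ i, log (1 - v i ω)} ≤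
      exp (Fintype.card ι * (τ * (1 / exp 1 - 1) + 1)) := by
  have hn : (0 : ℝ) < Fintype.card ι := by exact_mod_cast Fintype.card_pos
  have hevent : {ω | τ ≤ -(1 / (Fintype.card ι : ℝ)) * ∑ i, log (1 - v i ω)} =
      {ω | Fintype.card ι * τ ≤ ∑ i, -log (1 - v i ω)} := by
    ext ω
    rw [mem_ofPred_eq, mem_ofPred_eq, Finset.sum_neg_distrib, neg_mul, ← mul_neg, one_div,
      ← div_eq_inv_mul, le_div_iff₀ hn, mul_comm]
  have hinv : (exp 1)⁻¹ ≤ 1 := inv_le_one_of_one_le₀ (one_le_exp zero_le_one)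
  rw [hevent]
  refine (measureReal_sum_neg_log_one_sub_ge_le hv h hunif _ (t := 1 - (exp 1)⁻¹)
    (sub_nonneg.2 hinv) (sub_lt_self _ (by positivity))).trans_eq ?_
  rw [sub_sub_cancel, inv_inv, ← exp_nat_mul, mul_one, ← exp_add]
  ring_nf

theorem iIndepFun.iIndepFun_curry {κ β : Type*} [MeasurableSpace β]
    {X : ι × κ → Ω → β} (hX : ∀ p, Measurable (X p)) (h : iIndepFun X μ) :
    iIndepFun (fun i ω j ↦ X (i, j) ω) μ := by
  have := h.isProbabilityMeasure
  have hrow : ∀ i, iIndepFun (fun j ↦ X (i, j)) μ := fun i ↦ h.precomp (Prod.mk_right_injective i)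
  have (p : ι × κ) : IsProbabilityMeasure (μ.map (X p)) :=
    Measure.isProbabilityMeasure_map (hX p).aemeasurable
  rw [iIndepFun_iff_map_fun_eq_infinitePi_map (fun i ↦ by fun_prop)]
  have hcurry : (fun ω i j ↦ X (i, j) ω) = MeasurableEquiv.curry ι κ β ∘ fun ω p ↦ X p ω := rfl
  rw [hcurry, ← Measure.map_map (by fun_prop) (by fun_prop), h.map_fun_eq_infinitePi_map hX,
    Measure.infinitePi_map_curry fun i j ↦ μ.map (X (i, j))]
  congr with i : 1
  exact ((hrow i).map_fun_eq_infinitePi_map fun j ↦ hX (i, j)).symm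

theorem iIndepFun.measure_ciSup_ge_le [Fintype ι] [Nonempty ι] {Y : ι → Ω → ℝ}
    (hY : ∀ i, Measurable (Y i)) (h : iIndepFun Y μ) {τ p : ℝ} (hp : p ≤ 1)
    (hle : ∀ i, μ.real {ω | τ ≤ Y i ω} ≤ p) :
    μ {ω | τ ≤ ⨆ i, Y i ω} ≤ ENNReal.ofReal (1 - (1 - p) ^ Fintype.card ι) := by
  have := h.isProbabilityMeasure
  have hevent : {ω | τ ≤ ⨆ i, Y i ω} = (⋂ i, Y i ⁻¹' Iio τ)ᶜ := by
    ext ω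
    simp only [mem_ofPred_eq, mem_compl_iff, mem_iInter, mem_preimage, mem_Iio, not_forall,
      not_lt]
    constructor
    · intro hτ
      obtain ⟨i, hi⟩ := exists_eq_ciSup_of_finite (f := fun i ↦ Y i ω)
      exact ⟨i, hi ▸ hτ⟩
    · rintro ⟨i, hi⟩
      exact hi.trans (le_ciSup (Finite.bddAbove_range fun i ↦ Y i ω) i)
  have hbelow : ∀ i, 1 - p ≤ μ.real (Y i ⁻¹' Iio τ) := fun i ↦ by
    have hc : Y i ⁻¹' Iio τ = {ω | τ ≤ Y i ω}ᶜ := by ext; simp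
    rw [hc, probReal_compl_eq_one_sub (measurableSet_le measurable_const (hY i))]
    linarith [hle i]
  have hprod : μ.real (⋂ i, Y i ⁻¹' Iio τ) = ∏ i, μ.real (Y i ⁻¹' Iio τ) := by
    simp only [measureReal_def, ← ENNReal.toReal_prod]
    rw [h.meas_iInter fun i ↦ ⟨Iio τ, measurableSet_Iio, rfl⟩]
  rw [← ofReal_measureReal, hevent,
    probReal_compl_eq_one_sub (MeasurableSet.iInter fun i ↦ measurableSet_Iio.preimage (hY i)),
    hprod]
  gcongr
  calc (1 - p) ^ Fintype.card ι = ∏ _i : ι, (1 - p) := by rw [Finset.prod_const, Finset.card_univ]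
    _ ≤ _ := Finset.prod_le_prod (fun _ _ ↦ sub_nonneg.2 hp) fun i _ ↦ hbelow i

end ProbabilityTheory

/-- False positive bound for the Full Key Encoding method: if the `u i ξ` are mutually
independent and uniform on `[0,1]`, and `S_k(ξ) = −(1/T) ∑ i, ln(1 − u i ξ)`, then for
`τ_k ≥ e/(e−1)`,
`Pr(max_ξ S_k(ξ) ≥ τ_k) ≤ 1 − (1 − exp(T·(τ_k·(1/e − 1) + 1)))^K`. -/
theorem fke_false_positive_bound
    {Ω : Type*} [MeasurableSpace Ω] (μ : Measure Ω) [IsProbabilityMeasure μ]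
    (T K : ℕ) (hT : 1 ≤ T) (hK : 1 ≤ K)
    (u : Fin T × Fin K → Ω → ℝ) (hmeas : ∀ p, Measurable (u p))
    (hindep : iIndepFun u μ)
    (hunif : ∀ p, Measure.map (u p) μ = volume.restrict (Set.Icc (0 : ℝ) 1))
    (τk : ℝ) (hτk : Real.exp 1 / (Real.exp 1 - 1) ≤ τk) :
    μ {ω | τk ≤ ⨆ ξ : Fin K,
        -(1 / (T : ℝ)) * ∑ i : Fin T, Real.log (1 - u (i, ξ) ω)} ≤
      ENNReal.ofReal
        (1 - (1 - Real.exp ((T : ℝ) * (τk * (1 / Real.exp 1 - 1) + 1))) ^ K) := by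
  have : Nonempty (Fin T) := Fin.pos_iff_nonempty.mp hT
  have : Nonempty (Fin K) := Fin.pos_iff_nonempty.mp hK
  have hp : exp (T * (τk * (1 / exp 1 - 1) + 1)) ≤ 1 := exp_le_one_iff.2 <|
    mul_nonpos_of_nonneg_of_nonpos T.cast_nonneg (mul_one_div_exp_sub_one_add_one_nonpos hτk)
  have hcols : iIndepFun (fun ξ ω i ↦ u (i, ξ) ω) μ :=
    (hindep.precomp Prod.swap_injective).iIndepFun_curry fun p ↦ hmeas p.swap
  have hscores := hcols.comp (fun _ v ↦ -(1 / (T : ℝ)) * ∑ i, log (1 - v i)) fun _ ↦ by fun_prop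
  simpa using hscores.measure_ciSup_ge_le (fun ξ ↦ by fun_prop) hp fun ξ ↦ by
    simpa using measureReal_neg_mean_log_one_sub_ge_le (fun i ↦ hmeas (i, ξ))
      (hindep.precomp (Prod.mk_left_injective ξ)) (fun i ↦ hunif (i, ξ)) τk
end

section
/- Let T' ≥ 1 be an integer and let u_1, …, u_{T'} be independent random variables, each uniformly distributed on [0, 1]. Define the score S_d = −(1/T') · Σ_{i=1}^{T'} ln(1 − u_i). Then for every real τ_d ≥ 1, Pr(S_d ≥ τ_d) ≤ exp(T' · (τ_d · (1/e − 1) + 1)). -/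
open MeasureTheory ProbabilityTheory Real

/-! If `u` is uniform on `[0,1]` then `-log (1 - u)` is standard exponential: its moment
generating function is `∫₀¹ (1 - x) ^ (-t) dx = (1 - t)⁻¹` for `t < 1`. By independence the sum
`T' · S_d` has moment generating function `(1 - t)⁻¹ ^ T'`, and the Chernoff bound at
`t = 1 - 1/e` gives `exp (-(1 - 1/e) T' τ_d) · e ^ T'`. -/

lemma integrableOn_one_sub_rpow_neg {t : ℝ} (ht : t < 1) :
    IntegrableOn (fun x : ℝ => (1 - x) ^ (-t)) (Set.Ioo 0 1) := by
  have h : IntervalIntegrable (fun x : ℝ => x ^ (-t)) volume 0 1 :=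
    intervalIntegral.intervalIntegrable_rpow' (by linarith)
  have h' : IntervalIntegrable (fun x : ℝ => (1 - x) ^ (-t)) volume 0 1 := by
    simpa using (h.comp_sub_left 1).symm
  exact (intervalIntegrable_iff_integrableOn_Ioo_of_le zero_le_one).mp h'

lemma integral_one_sub_rpow_neg {t : ℝ} (ht : t < 1) :
    ∫ x in Set.Ioo (0 : ℝ) 1, (1 - x) ^ (-t) = (1 - t)⁻¹ := by
  rw [← integral_Ioc_eq_integral_Ioo, ← intervalIntegral.integral_of_le zero_le_one,
    intervalIntegral.integral_comp_sub_left (fun x : ℝ => x ^ (-t)) 1,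
    sub_self, sub_zero, integral_rpow (Or.inl (by linarith)),
    zero_rpow (by linarith), one_rpow]
  field_simp
  ring

lemma exp_mul_neg_log_one_sub {t x : ℝ} (hx : x < 1) :
    exp (t * -log (1 - x)) = (1 - x) ^ (-t) := by
  rw [rpow_def_of_pos (by linarith)]
  ring_nf

lemma integrable_exp_mul_neg_log_one_sub {t : ℝ} (ht : t < 1) :
    Integrable (fun x => exp (t * -log (1 - x))) (volume.restrict (Set.Icc (0 : ℝ) 1)) := by
  rw [Measure.restrict_congr_set Ioo_ae_eq_Icc.symm]
  exact (integrableOn_congr_fun (fun x hx => exp_mul_neg_log_one_sub hx.2) measurableSet_Ioo).mpr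
    (integrableOn_one_sub_rpow_neg ht)

lemma mgf_neg_log_one_sub {t : ℝ} (ht : t < 1) :
    mgf (fun x => -log (1 - x)) (volume.restrict (Set.Icc (0 : ℝ) 1)) t = (1 - t)⁻¹ := by
  rw [mgf, Measure.restrict_congr_set Ioo_ae_eq_Icc.symm,
    setIntegral_congr_fun measurableSet_Ioo fun x hx => exp_mul_neg_log_one_sub hx.2]
  exact integral_one_sub_rpow_neg ht

section Uniform

variable {Ω : Type*} [MeasurableSpace Ω] {μ : Measure Ω} {U : Ω → ℝ}

lemma integrable_exp_mul_neg_log_one_sub_of_map_eq (hU : Measurable U)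
    (hunif : μ.map U = volume.restrict (Set.Icc 0 1)) {t : ℝ} (ht : t < 1) :
    Integrable (fun ω => exp (t * -log (1 - U ω))) μ := by
  have h := integrable_exp_mul_neg_log_one_sub ht
  rw [← hunif] at h
  exact h.comp_measurable hU

lemma mgf_neg_log_one_sub_of_map_eq (hU : Measurable U)
    (hunif : μ.map U = volume.restrict (Set.Icc 0 1)) {t : ℝ} (ht : t < 1) :
    mgf (fun ω => -log (1 - U ω)) μ t = (1 - t)⁻¹ := by
  have hf : Measurable fun x : ℝ => exp (t * -log (1 - x)) := by fun_prop
  rw [← mgf_neg_log_one_sub ht, ← hunif, mgf_map hU.aemeasurable hf.aestronglyMeasurable]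
  rfl

end Uniform

lemma measureReal_sum_neg_log_one_sub_ge_le {ι Ω : Type*} [Fintype ι] [MeasurableSpace Ω]
    {μ : Measure Ω} [IsProbabilityMeasure μ] {u : ι → Ω → ℝ} (hmeas : ∀ i, Measurable (u i))
    (hindep : iIndepFun u μ) (hunif : ∀ i, μ.map (u i) = volume.restrict (Set.Icc 0 1))
    {t : ℝ} (ht0 : 0 ≤ t) (ht1 : t < 1) (a : ℝ) :
    μ.real {ω | a ≤ ∑ i, -log (1 - u i ω)} ≤ exp (-t * a) * (1 - t)⁻¹ ^ Fintype.card ι := by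
  set X : ι → Ω → ℝ := fun i ω => -log (1 - u i ω)
  have hX : ∀ i, Measurable (X i) := fun i => by fun_prop
  have hindepX : iIndepFun X μ := hindep.comp (fun _ x => -log (1 - x)) fun _ => by fun_prop
  have hint := hindepX.integrable_exp_mul_sum hX (s := Finset.univ) (t := t)
    fun i _ => integrable_exp_mul_neg_log_one_sub_of_map_eq (hmeas i) (hunif i) ht1
  have hchernoff := measure_ge_le_exp_mul_mgf a ht0 hint
  rw [hindepX.mgf_sum hX, Finset.prod_congr rfl
    fun i _ => mgf_neg_log_one_sub_of_map_eq (hmeas i) (hunif i) ht1] at hchernoff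
  simpa [X] using hchernoff

theorem dw_false_positive_bound_general
    {Ω : Type*} [MeasurableSpace Ω] (μ : Measure Ω) [IsProbabilityMeasure μ]
    (T' : ℕ) (hT' : 1 ≤ T')
    (u : Fin T' → Ω → ℝ) (hmeas : ∀ i, Measurable (u i))
    (hindep : iIndepFun u μ)
    (hunif : ∀ i, Measure.map (u i) μ = volume.restrict (Set.Icc (0 : ℝ) 1))
    (τd : ℝ) :
    μ {ω | τd ≤ -(1 / (T' : ℝ)) * ∑ i : Fin T', Real.log (1 - u i ω)} ≤
      ENNReal.ofReal (Real.exp ((T' : ℝ) * (τd * (1 / Real.exp 1 - 1) + 1))) := by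
  have hT : (0 : ℝ) < T' := by exact_mod_cast hT'
  have hevent : {ω | τd ≤ -(1 / (T' : ℝ)) * ∑ i : Fin T', log (1 - u i ω)} =
      {ω | T' * τd ≤ ∑ i, -log (1 - u i ω)} := by
    ext ω
    rw [Set.mem_ofPred_eq, Set.mem_ofPred_eq, Finset.sum_neg_distrib, neg_mul_comm, one_div,
      inv_mul_eq_div, le_div_iff₀' hT]
  have ht0 : 0 ≤ 1 - (exp 1)⁻¹ := sub_nonneg.2 (inv_le_one_of_one_le₀ (one_le_exp zero_le_one))
  have ht1 : 1 - (exp 1)⁻¹ < 1 := sub_lt_self 1 (inv_pos.2 (exp_pos 1))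
  rw [hevent, ← ofReal_measureReal]
  refine ENNReal.ofReal_le_ofReal <|
    (measureReal_sum_neg_log_one_sub_ge_le hmeas hindep hunif ht0 ht1 _).trans_eq ?_
  rw [sub_sub_cancel, inv_inv, Fintype.card_fin, ← exp_nat_mul, mul_one, ← exp_add]
  ring_nf

/-- False positive bound for the Dual Watermark indicator: if `u 1, …, u T'` are independent
and uniform on `[0,1]`, and `S_d = −(1/T') ∑ i, ln(1 − u i)`, then for every `τ_d ≥ 1`,
`Pr(S_d ≥ τ_d) ≤ exp(T'·(τ_d·(1/e − 1) + 1))`. -/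
theorem dw_false_positive_bound
    {Ω : Type*} [MeasurableSpace Ω] (μ : Measure Ω) [IsProbabilityMeasure μ]
    (T' : ℕ) (hT' : 1 ≤ T')
    (u : Fin T' → Ω → ℝ) (hmeas : ∀ i, Measurable (u i))
    (hindep : iIndepFun u μ)
    (hunif : ∀ i, Measure.map (u i) μ = volume.restrict (Set.Icc (0 : ℝ) 1))
    (τd : ℝ) (hτd : 1 ≤ τd) :
    μ {ω | τd ≤ -(1 / (T' : ℝ)) * ∑ i : Fin T', Real.log (1 - u i ω)} ≤
      ENNReal.ofReal (Real.exp ((T' : ℝ) * (τd * (1 / Real.exp 1 - 1) + 1))) :=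
  dw_false_positive_bound_general μ T' hT' u hmeas hindep hunif τd
end
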